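/- Let d ≥ 1, n : Fin d → ℕ with n k > 0, and r : Fin (d+1) → ℕ with r 0 = 1 and r d = 1. Suppose the tensor A : (Π k : Fin d, ZMod (n k)) → ℂ is in tensor-train (TT) format with cores G k : ZMod (n k) → Matrix (Fin (r k)) (Fin (r (k+1))) ℂ, i.e. A(i) is the (single) entry of the matrix product G 0 (i 0) * G 1 (i 1) * ⋯ * G (d−1) (i (d−1)). Define transformed cores Ĝ k (m) = Σ_j exp(−2πI · m·j/(n k)) · G k (j) (the one-dimensional DFT applied entrywise along the mode index of each core). Then the multidimensional discrete Fourier transform of A is in TT format with the same ranks r and cores Ĝ: 𝓕(A)(i) is the entry of Ĝ 0 (i 0) * Ĝ 1 (i 1) * ⋯ * Ĝ (d−1) (i (d−1)). Hence the DFT does not increase TT-ranks. -/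
import Mathlib


open Complex BigOperators

/-- Multidimensional discrete Fourier transform of a tensor indexed by
`Π k : Fin d, ZMod (n k)`:
`𝓕(A)(i) = Σ_j exp(−2πI · Σ_k (i_k · j_k)/(n k)) · A(j)`. -/
noncomputable def mdft {d : ℕ} (n : Fin d → ℕ) [∀ k, NeZero (n k)]
    (A : (∀ k : Fin d, ZMod (n k)) → ℂ) : (∀ k : Fin d, ZMod (n k)) → ℂ :=
  fun i => ∑ j : ∀ k : Fin d, ZMod (n k),
    Complex.exp ((-2 : ℂ) * Real.pi * Complex.I *
      ∑ k : Fin d, (((i k).val : ℂ) * ((j k).val : ℂ)) / (n k : ℂ)) * A j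

/-- Evaluation of a tensor-train representation with ranks `r : Fin (d+1) → ℕ` and
cores `G k : ZMod (n k) → Matrix (Fin (r k)) (Fin (r (k+1))) ℂ`: the (single) entry
of the 1×1 matrix product `G 0 (i 0) * ⋯ * G (d−1) (i (d−1))` (for `r 0 = r d = 1`),
written as the sum over all index paths `α`:
`Σ_α ∏_k (G k (i k)) (α k) (α (k+1))`. -/
noncomputable def ttEval {d : ℕ} (n : Fin d → ℕ) [∀ k, NeZero (n k)]
    (r : Fin (d + 1) → ℕ)
    (G : ∀ k : Fin d, ZMod (n k) → Matrix (Fin (r k.castSucc)) (Fin (r k.succ)) ℂ)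
    (i : ∀ k : Fin d, ZMod (n k)) : ℂ :=
  ∑ α : ∀ k : Fin (d + 1), Fin (r k),
    ∏ k : Fin d, G k (i k) (α k.castSucc) (α k.succ)

/-- The multidimensional DFT of a tensor in TT format is in TT format with the same
ranks, the cores being the one-dimensional DFTs (applied entrywise along the mode
index) of the original cores.  Hence the DFT does not increase TT-ranks. -/
theorem mdft_tt {d : ℕ} (hd : 1 ≤ d) (n : Fin d → ℕ) [∀ k, NeZero (n k)]
    (r : Fin (d + 1) → ℕ) (hr0 : r 0 = 1) (hrd : r (Fin.last d) = 1)
    (G : ∀ k : Fin d, ZMod (n k) → Matrix (Fin (r k.castSucc)) (Fin (r k.succ)) ℂ)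
    (A : (∀ k : Fin d, ZMod (n k)) → ℂ)
    (hA : ∀ i, A i = ttEval n r G i) :
    ∀ i, mdft n A i =
      ttEval n r
        (fun k m => fun a b =>
          ∑ j : ZMod (n k),
            Complex.exp ((-2 : ℂ) * Real.pi * Complex.I *
              ((m.val : ℂ) * (j.val : ℂ) / (n k : ℂ))) * G k j a b)
        i := by
  intro i
  simp only [mdft, ttEval, hA]
  simp only [Finset.mul_sum]
  rw [Finset.sum_comm]
  refine Finset.sum_congr rfl fun α _ => ?_
  conv_rhs => rw [Finset.prod_univ_sum]
  rw [Fintype.piFinset_univ]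
  refine Finset.sum_congr rfl fun j _ => ?_
  rw [Finset.prod_mul_distrib, ← Complex.exp_sum]
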